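/- arXiv:1902.01539 — 2 statements merged into one kernel-verified Lean document; each statement's English description precedes it below -/
import Mathlib

section
/- Let n ≥ 1 be an integer, α > 0 a real number, and let f : ℝ → ℝ be n-times continuously differentiable on [0, ∞) with f(x) → L as x → ∞. Assume that for each integer k with 1 ≤ k ≤ n − 1, the function x^k · f^{(k)}(x) tends to 0 both as x → 0⁺ and as x → ∞, and that x ↦ x^{n−1} f^{(n)}(x) is integrable on (0, ∞). Then ∫₀^∞ x^{n−1} f^{(n)}(α x) dx = (−1)^{n−1} (L − f(0)) · (n−1)! / α^n. -/
/-!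
Repeated integration by parts: if `D (k + 1)` is the derivative of `D k`, then
`P m = x ^ m * D m - m * P (m - 1)`, `P 0 = D 0`, is an antiderivative of `x ^ m * D (m + 1)`.
Taking `D k = f⁽ᵏ⁾`, the terms `x ^ k f⁽ᵏ⁾(x)` with `k ≥ 1` vanish at `0` and, by hypothesis,
at infinity, so `∫₀^∞ x ^ m f⁽ᵐ⁺¹⁾ = (-1) ^ m m! (L - f 0)`.
The substitution `x ↦ α x` then contributes the factor `α⁻ⁿ`.
-/

open Filter MeasureTheory Topology

noncomputable def powMulAntideriv (D : ℕ → ℝ → ℝ) : ℕ → ℝ → ℝ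
  | 0, x => D 0 x
  | m + 1, x => x ^ (m + 1) * D (m + 1) x - (m + 1) * powMulAntideriv D m x

namespace powMulAntideriv

variable (D : ℕ → ℝ → ℝ)

theorem succ (m : ℕ) : powMulAntideriv D (m + 1) =
    fun x => x ^ (m + 1) * D (m + 1) x - (m + 1) * powMulAntideriv D m x :=
  rfl

theorem hasDerivAt {x : ℝ} (m : ℕ) (hD : ∀ k ≤ m, HasDerivAt (D k) (D (k + 1) x) x) :
    HasDerivAt (powMulAntideriv D m) (x ^ m * D (m + 1) x) x := by
  induction m with
  | zero => simpa [powMulAntideriv] using hD 0 le_rfl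
  | succ m ih =>
    have hpow : HasDerivAt (fun y : ℝ => y ^ (m + 1)) ((m + 1 : ℕ) * x ^ m) x := by
      simpa using hasDerivAt_pow (m + 1) x
    have h := (hpow.mul (hD (m + 1) le_rfl)).sub
      ((ih fun k hk => hD k (hk.trans m.le_succ)).const_mul ((m : ℝ) + 1))
    rw [succ]
    exact h.congr_deriv (by push_cast; ring)

theorem apply_zero (m : ℕ) :
    powMulAntideriv D m 0 = (-1) ^ m * m.factorial * D 0 0 := by
  induction m with
  | zero => simp [powMulAntideriv]
  | succ m ih =>
    rw [powMulAntideriv, ih, Nat.factorial_succ]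
    push_cast
    ring

theorem continuousOn {s : Set ℝ} (m : ℕ) (hD : ∀ k ≤ m, ContinuousOn (D k) s) :
    ContinuousOn (powMulAntideriv D m) s := by
  induction m with
  | zero => exact hD 0 le_rfl
  | succ m ih =>
    exact ((continuousOn_id.pow (m + 1)).mul (hD (m + 1) le_rfl)).sub
      (continuousOn_const.mul (ih fun k hk => hD k (hk.trans m.le_succ)))

theorem tendsto_atTop {L : ℝ} (m : ℕ) (h0 : Tendsto (D 0) atTop (𝓝 L))
    (hD : ∀ k, 1 ≤ k → k ≤ m → Tendsto (fun x : ℝ => x ^ k * D k x) atTop (𝓝 0)) :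
    Tendsto (powMulAntideriv D m) atTop (𝓝 ((-1) ^ m * m.factorial * L)) := by
  induction m with
  | zero => simpa [powMulAntideriv] using h0
  | succ m ih =>
    have h := (hD (m + 1) le_add_self le_rfl).sub
      ((ih fun k hk hkm => hD k hk (hkm.trans m.le_succ)).const_mul ((m : ℝ) + 1))
    rw [succ]
    convert h using 2
    rw [Nat.factorial_succ]
    push_cast
    ring

end powMulAntideriv

theorem hasDerivAt_iteratedDerivWithin {f : ℝ → ℝ} {s : Set ℝ} {n : WithTop ℕ∞} {k : ℕ} {x : ℝ}
    (hf : ContDiffOn ℝ n f s) (hs : UniqueDiffOn ℝ s) (hk : k < n) (hx : s ∈ 𝓝 x) :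
    HasDerivAt (iteratedDerivWithin k f s) (iteratedDerivWithin (k + 1) f s x) x := by
  have h := ((hf.differentiableOn_iteratedDerivWithin hk hs) x
    (mem_of_mem_nhds hx)).hasDerivWithinAt
  rw [← iteratedDerivWithin_succ] at h
  exact h.hasDerivAt hx

theorem integral_Ioi_pow_mul_comp_mul_left (g : ℝ → ℝ) (m : ℕ) {α : ℝ} (hα : 0 < α) :
    ∫ x in Set.Ioi (0 : ℝ), x ^ m * g (α * x)
      = (α ^ (m + 1))⁻¹ * ∫ x in Set.Ioi (0 : ℝ), x ^ m * g x := by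
  have hscale : ∀ x : ℝ, x ^ m * g (α * x) = (α ^ m)⁻¹ * ((α * x) ^ m * g (α * x)) := by
    intro x
    rw [mul_pow]
    field_simp
  simp_rw [hscale]
  rw [integral_const_mul, integral_comp_mul_left_Ioi (fun y => y ^ m * g y) 0 hα, mul_zero,
    smul_eq_mul, pow_succ, mul_inv, mul_assoc]

theorem integral_Ioi_pow_mul_iteratedDerivWithin {f : ℝ → ℝ} {L : ℝ} (m : ℕ)
    (hf : ContDiffOn ℝ (m + 1 : ℕ) f (Set.Ici 0))
    (hlim : Tendsto f atTop (𝓝 L))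
    (hzero : ∀ k, 1 ≤ k → k ≤ m →
      Tendsto (fun x : ℝ => x ^ k * iteratedDerivWithin k f (Set.Ici 0) x) atTop (𝓝 0))
    (hint : IntegrableOn (fun x : ℝ => x ^ m * iteratedDerivWithin (m + 1) f (Set.Ici 0) x)
      (Set.Ioi 0)) :
    ∫ x in Set.Ioi (0 : ℝ), x ^ m * iteratedDerivWithin (m + 1) f (Set.Ici 0) x
      = (-1) ^ m * m.factorial * (L - f 0) := by
  set D : ℕ → ℝ → ℝ := fun k => iteratedDerivWithin k f (Set.Ici 0)
  have hcont : ContinuousOn (powMulAntideriv D m) (Set.Ici 0) :=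
    powMulAntideriv.continuousOn D m fun k hk =>
      hf.continuousOn_iteratedDerivWithin (by exact_mod_cast hk.trans m.le_succ)
        (uniqueDiffOn_Ici 0)
  have hderiv : ∀ x ∈ Set.Ioi (0 : ℝ),
      HasDerivAt (powMulAntideriv D m) (x ^ m * D (m + 1) x) x := fun x hx =>
    powMulAntideriv.hasDerivAt D m fun k hk =>
      hasDerivAt_iteratedDerivWithin hf (uniqueDiffOn_Ici 0)
        (by exact_mod_cast Nat.lt_succ_of_le hk) (Ici_mem_nhds hx)
  have hlimD : Tendsto (powMulAntideriv D m) atTop (𝓝 ((-1) ^ m * m.factorial * L)) :=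
    powMulAntideriv.tendsto_atTop D m (by simpa [D] using hlim) hzero
  rw [integral_Ioi_of_hasDerivAt_of_tendsto (hcont 0 Set.self_mem_Ici) hderiv hint hlimD,
    powMulAntideriv.apply_zero]
  simp only [D, iteratedDerivWithin_zero]
  ring

/-- Scaled form of the paper's main integral formula:
`∫₀^∞ x^(n-1) f^(n)(α x) dx = (-1)^(n-1) (L - f 0) (n-1)! / α^n`. -/
theorem integral_rpow_iteratedDeriv_scaled (n : ℕ) (hn : 1 ≤ n) (α : ℝ) (hα : 0 < α)
    (f : ℝ → ℝ) (L : ℝ)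
    (hf : ContDiffOn ℝ n f (Set.Ici 0))
    (hlim : Tendsto f atTop (𝓝 L))
    (hzero : ∀ k : ℕ, 1 ≤ k → k ≤ n - 1 →
      Tendsto (fun x : ℝ => x ^ k * iteratedDerivWithin k f (Set.Ici 0) x) (𝓝[>] 0) (𝓝 0) ∧
      Tendsto (fun x : ℝ => x ^ k * iteratedDerivWithin k f (Set.Ici 0) x) atTop (𝓝 0))
    (hint : IntegrableOn (fun x : ℝ => x ^ (n - 1) * iteratedDerivWithin n f (Set.Ici 0) x)
      (Set.Ioi 0)) :
    ∫ x in Set.Ioi (0 : ℝ), x ^ (n - 1) * iteratedDerivWithin n f (Set.Ici 0) (α * x)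
      = (-1) ^ (n - 1) * (L - f 0) * (Nat.factorial (n - 1) : ℝ) / α ^ n := by
  obtain ⟨m, rfl⟩ : ∃ m, n = m + 1 := ⟨n - 1, by omega⟩
  rw [Nat.add_sub_cancel] at hzero hint ⊢
  rw [integral_Ioi_pow_mul_comp_mul_left _ m hα,
    integral_Ioi_pow_mul_iteratedDerivWithin m hf hlim
      (fun k hk hkm => (hzero k hk hkm).2) hint]
  field_simp
end

section
/- Let n ≥ 1 be an integer. Then ∫₀^∞ x^{n−1} · H_{n−1}(x) · e^{−x²} dx = (√π / 2) · (n−1)!, where H_m denotes the m-th physicists' Hermite polynomial, defined by the Rodrigues formula H_m(x) = (−1)^m e^{x²} · (d^m/dx^m)(e^{−t²})(x). -/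
/-!
With `g x = exp (-x ^ 2)`, the integrand is `(-1) ^ m x ^ m g⁽ᵐ⁾(x)` for `m = n - 1`. Every
`x ^ k g⁽ᵐ⁾(x)` is a polynomial times `g`, so it is integrable and vanishes at `0` (for `k > 0`) and
at `∞`; integrating by parts therefore gives `Iₘ₊₁ = -(m + 1) Iₘ` for `Iₘ = ∫₀^∞ x ^ m g⁽ᵐ⁾`, and
`I₀ = √π / 2` is the half Gaussian integral.
-/

open MeasureTheory Real Filter Topology Polynomial Set
open scoped Nat

lemma hasDerivAt_eval_mul_exp_neg_sq (P : ℝ[X]) (x : ℝ) :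
    HasDerivAt (fun x => P.eval x * exp (-x ^ 2))
      ((derivative P - 2 * X * P).eval x * exp (-x ^ 2)) x := by
  refine ((P.hasDerivAt x).fun_mul (hasDerivAt_pow 2 x).fun_neg.exp).congr_deriv ?_
  simp only [Nat.cast_ofNat, Nat.add_one_sub_one, pow_one, mul_neg, eval_sub, eval_mul, eval_ofNat,
    eval_X]
  ring

lemma exists_iteratedDeriv_exp_neg_sq_eq (m : ℕ) :
    ∃ P : ℝ[X], iteratedDeriv m (fun x => exp (-x ^ 2)) = fun x => P.eval x * exp (-x ^ 2) := by
  induction m with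
  | zero => exact ⟨1, by simp⟩
  | succ m ih =>
    obtain ⟨P, hP⟩ := ih
    exact ⟨derivative P - 2 * X * P, by
      rw [iteratedDeriv_succ, hP]
      exact funext fun x => (hasDerivAt_eval_mul_exp_neg_sq P x).deriv⟩

lemma integrable_eval_mul_exp_neg_sq (P : ℝ[X]) :
    Integrable (fun x => P.eval x * exp (-x ^ 2)) := by
  induction P using Polynomial.induction_on' with
  | add P Q hP hQ =>
    refine (hP.add hQ).congr (.of_forall fun x => ?_)
    simp [add_mul]
  | monomial n a =>
    have h := integrable_rpow_mul_exp_neg_mul_sq (b := 1) one_pos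
      (neg_one_lt_zero.trans_le (Nat.cast_nonneg (α := ℝ) n))
    simpa [rpow_natCast, mul_assoc] using h.const_mul a

lemma tendsto_eval_mul_exp_neg_sq_atTop (P : ℝ[X]) :
    Tendsto (fun x => P.eval x * exp (-x ^ 2)) atTop (𝓝 0) := by
  induction P using Polynomial.induction_on' with
  | add P Q hP hQ => simpa only [eval_add, add_mul, add_zero] using hP.add hQ
  | monomial n a =>
    have hexp : Tendsto (fun x : ℝ => exp (-(1 / 2) * x)) atTop (𝓝 0) := by
      simpa only [neg_mul, Function.comp_def, id] using
        tendsto_exp_neg_atTop_nhds_zero.comp (tendsto_id.const_mul_atTop one_half_pos)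
    have h := (rpow_mul_exp_neg_mul_sq_isLittleO_exp_neg one_pos n).isBigO.trans_tendsto hexp
    simpa [rpow_natCast, mul_assoc] using h.const_mul a

section PowMulIteratedDeriv

variable (k m : ℕ)

lemma exists_pow_mul_iteratedDeriv_exp_neg_sq_eq :
    ∃ P : ℝ[X], (fun x => x ^ k * iteratedDeriv m (fun x => exp (-x ^ 2)) x) =
      fun x => P.eval x * exp (-x ^ 2) := by
  obtain ⟨P, hP⟩ := exists_iteratedDeriv_exp_neg_sq_eq m
  exact ⟨X ^ k * P, funext fun x => by simp [hP, mul_assoc]⟩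

lemma continuous_pow_mul_iteratedDeriv_exp_neg_sq :
    Continuous fun x => x ^ k * iteratedDeriv m (fun x => exp (-x ^ 2)) x := by
  obtain ⟨P, hP⟩ := exists_pow_mul_iteratedDeriv_exp_neg_sq_eq k m
  rw [hP]
  fun_prop

lemma integrable_pow_mul_iteratedDeriv_exp_neg_sq :
    Integrable fun x => x ^ k * iteratedDeriv m (fun x => exp (-x ^ 2)) x := by
  obtain ⟨P, hP⟩ := exists_pow_mul_iteratedDeriv_exp_neg_sq_eq k m
  rw [hP]
  exact integrable_eval_mul_exp_neg_sq P

lemma tendsto_pow_mul_iteratedDeriv_exp_neg_sq_atTop :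
    Tendsto (fun x => x ^ k * iteratedDeriv m (fun x => exp (-x ^ 2)) x) atTop (𝓝 0) := by
  obtain ⟨P, hP⟩ := exists_pow_mul_iteratedDeriv_exp_neg_sq_eq k m
  rw [hP]
  exact tendsto_eval_mul_exp_neg_sq_atTop P

end PowMulIteratedDeriv

lemma integral_Ioi_pow_succ_mul_iteratedDeriv_succ_exp_neg_sq (m : ℕ) :
    ∫ x in Ioi 0, x ^ (m + 1) * iteratedDeriv (m + 1) (fun x => exp (-x ^ 2)) x =
      -((m + 1) * ∫ x in Ioi 0, x ^ m * iteratedDeriv m (fun x => exp (-x ^ 2)) x) := by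
  have hu (x : ℝ) : HasDerivAt (fun x => x ^ (m + 1)) ((m + 1) * x ^ m) x := by
    simpa using hasDerivAt_pow (m + 1) x
  have hv (x : ℝ) : HasDerivAt (iteratedDeriv m fun x => exp (-x ^ 2))
      (iteratedDeriv (m + 1) (fun x => exp (-x ^ 2)) x) x := by
    obtain ⟨P, hP⟩ := exists_iteratedDeriv_exp_neg_sq_eq m
    rw [iteratedDeriv_succ, hP]
    exact (hasDerivAt_eval_mul_exp_neg_sq P x).differentiableAt.hasDerivAt
  have h_zero : Tendsto (fun x => x ^ (m + 1) * iteratedDeriv m (fun x => exp (-x ^ 2)) x)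
      (𝓝[>] 0) (𝓝 0) := by
    simpa using ((continuous_pow_mul_iteratedDeriv_exp_neg_sq (m + 1) m).tendsto 0).mono_left
      nhdsWithin_le_nhds
  have hu'v : IntegrableOn (fun x => (m + 1) * x ^ m * iteratedDeriv m (fun x => exp (-x ^ 2)) x)
      (Ioi 0) := by
    simpa only [mul_assoc] using
      ((integrable_pow_mul_iteratedDeriv_exp_neg_sq m m).const_mul ((m : ℝ) + 1)).integrableOn
  rw [integral_Ioi_mul_deriv_eq_deriv_mul (fun x _ => hu x) (fun x _ => hv x)
    (integrable_pow_mul_iteratedDeriv_exp_neg_sq (m + 1) (m + 1)).integrableOn hu'v h_zero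
    (tendsto_pow_mul_iteratedDeriv_exp_neg_sq_atTop (m + 1) m), ← integral_const_mul]
  simp [mul_assoc]

theorem integral_Ioi_pow_mul_iteratedDeriv_exp_neg_sq (m : ℕ) :
    ∫ x in Ioi 0, x ^ m * iteratedDeriv m (fun x => exp (-x ^ 2)) x =
      (-1) ^ m * m ! * (√π / 2) := by
  induction m with
  | zero => simpa using integral_gaussian_Ioi 1
  | succ m ih =>
    rw [integral_Ioi_pow_succ_mul_iteratedDeriv_succ_exp_neg_sq, ih, Nat.factorial_succ]
    push_cast
    ring

theorem integral_hermite_general (n : ℕ) (H : ℕ → ℝ → ℝ)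
    (hH : ∀ (m : ℕ) (x : ℝ),
      H m x = (-1) ^ m * Real.exp (x ^ 2) * iteratedDeriv m (fun t : ℝ => Real.exp (-t ^ 2)) x) :
    ∫ x in Set.Ioi (0 : ℝ), x ^ (n - 1) * H (n - 1) x * Real.exp (-x ^ 2)
      = Real.sqrt π / 2 * (Nat.factorial (n - 1) : ℝ) := by
  have hintegrand : ∀ m x, x ^ m * H m x * exp (-x ^ 2) =
      (-1) ^ m * (x ^ m * iteratedDeriv m (fun t => exp (-t ^ 2)) x) := fun m x => by
    rw [hH, show exp (x ^ 2) = (exp (-x ^ 2))⁻¹ by rw [exp_neg, inv_inv]]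
    field_simp
  simp_rw [hintegrand, integral_const_mul, integral_Ioi_pow_mul_iteratedDeriv_exp_neg_sq,
    ← mul_assoc, ← pow_add, Even.neg_one_pow ⟨_, rfl⟩]
  ring

/-- For `n ≥ 1`, `∫₀^∞ x^(n-1) H_(n-1)(x) e^(-x²) dx = (√π / 2) (n-1)!`, where `H_m` is the
`m`-th physicists' Hermite polynomial, given by the Rodrigues formula
`H_m(x) = (-1)^m e^(x²) (d^m/dx^m)(e^(-t²))(x)`. -/
theorem integral_hermite (n : ℕ) (hn : 1 ≤ n) (H : ℕ → ℝ → ℝ)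
    (hH : ∀ (m : ℕ) (x : ℝ),
      H m x = (-1) ^ m * Real.exp (x ^ 2) * iteratedDeriv m (fun t : ℝ => Real.exp (-t ^ 2)) x) :
    ∫ x in Set.Ioi (0 : ℝ), x ^ (n - 1) * H (n - 1) x * Real.exp (-x ^ 2)
      = Real.sqrt π / 2 * (Nat.factorial (n - 1) : ℝ) :=
  integral_hermite_general n H hH
end
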